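/- Let X = Xᵀ and Y = Yᵀ in ℝ^{n×n} satisfy ker R_X ⊆ ker S_X and ker R_Y ⊆ ker S_Y, and let Δ := X − Y. Then 𝔇(X) − 𝔇(Y) = Δ − A_Yᵀ Δ A_Y + A_Yᵀ Δ B R_X† Bᵀ Δ A_Y. -/

import Mathlib

open Matrix

-- The Moore–Penrose pseudoinverse of a real matrix, characterised by the four
-- Penrose equations (it exists and is unique for every real matrix).
open Classical in
noncomputable def mpinv {α β : Type*} [Fintype α] [Fintype β]
    (M : Matrix α β ℝ) : Matrix β α ℝ :=
  if h : ∃ P : Matrix β α ℝ,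
      M * P * M = M ∧ P * M * P = P ∧ (M * P)ᵀ = M * P ∧ (P * M)ᵀ = P * M
  then h.choose else 0

/-- `R_X = R + BᵀXB`. -/
noncomputable def RX {ι κ : Type*} [Fintype ι] [Fintype κ]
    (R : Matrix κ κ ℝ) (B : Matrix ι κ ℝ) (X : Matrix ι ι ℝ) : Matrix κ κ ℝ :=
  R + Bᵀ * X * B

/-- `S_X = AᵀXB + S`. -/
noncomputable def SX {ι κ : Type*} [Fintype ι] [Fintype κ]
    (A : Matrix ι ι ℝ) (B S : Matrix ι κ ℝ) (X : Matrix ι ι ℝ) : Matrix ι κ ℝ :=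
  Aᵀ * X * B + S

/-- `K_X = R_X† S_Xᵀ`. -/
noncomputable def KX {ι κ : Type*} [Fintype ι] [Fintype κ]
    (A : Matrix ι ι ℝ) (B S : Matrix ι κ ℝ) (R : Matrix κ κ ℝ) (X : Matrix ι ι ℝ) :
    Matrix κ ι ℝ :=
  mpinv (RX R B X) * (SX A B S X)ᵀ

/-- The closed-loop matrix `A_X = A - B K_X`. -/
noncomputable def AX {ι κ : Type*} [Fintype ι] [Fintype κ]
    (A : Matrix ι ι ℝ) (B S : Matrix ι κ ℝ) (R : Matrix κ κ ℝ) (X : Matrix ι ι ℝ) :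
    Matrix ι ι ℝ :=
  A - B * KX A B S R X

/-- The kernel condition `ker R_X ⊆ ker S_X`. -/
def KerCond {ι κ : Type*} [Fintype ι] [Fintype κ]
    (A : Matrix ι ι ℝ) (B S : Matrix ι κ ℝ) (R : Matrix κ κ ℝ) (X : Matrix ι ι ℝ) : Prop :=
  ∀ v : κ → ℝ, (RX R B X).mulVec v = 0 → (SX A B S X).mulVec v = 0

/-- The Riccati operator `𝔇(X) = X - AᵀXA + S_X R_X† S_Xᵀ - Q`. -/
noncomputable def DOp {ι κ : Type*} [Fintype ι] [Fintype κ]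
    (A Q : Matrix ι ι ℝ) (B S : Matrix ι κ ℝ) (R : Matrix κ κ ℝ) (X : Matrix ι ι ℝ) :
    Matrix ι ι ℝ :=
  X - Aᵀ * X * A + SX A B S X * mpinv (RX R B X) * (SX A B S X)ᵀ - Q

/-- The Riccati map `ℛ(X) = AᵀXA - S_X R_X† S_Xᵀ + Q`. -/
noncomputable def Ricc {ι κ : Type*} [Fintype ι] [Fintype κ]
    (A Q : Matrix ι ι ℝ) (B S : Matrix ι κ ℝ) (R : Matrix κ κ ℝ) (X : Matrix ι ι ℝ) :
    Matrix ι ι ℝ :=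
  Aᵀ * X * A - SX A B S X * mpinv (RX R B X) * (SX A B S X)ᵀ + Q

/-- `X` is a symmetric solution of CGDARE(Σ): it is symmetric, satisfies the GDARE and
the kernel condition `ker R_X ⊆ ker S_X`. -/
def IsCGDARESolution {ι κ : Type*} [Fintype ι] [Fintype κ]
    (A Q : Matrix ι ι ℝ) (B S : Matrix ι κ ℝ) (R : Matrix κ κ ℝ) (X : Matrix ι ι ℝ) : Prop :=
  Xᵀ = X ∧ X = Ricc A Q B S R X ∧ KerCond A B S R X

/-- The matrix `N = [[A, 0, B], [Q, -I, S], [Sᵀ, 0, R]]` of the extended symplectic pencil. -/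
noncomputable def Nmat {n m : ℕ} (A Q : Matrix (Fin n) (Fin n) ℝ)
    (B S : Matrix (Fin n) (Fin m) ℝ) (R : Matrix (Fin m) (Fin m) ℝ) :
    Matrix (Fin n ⊕ (Fin n ⊕ Fin m)) (Fin n ⊕ (Fin n ⊕ Fin m)) ℝ :=
  fromBlocks A (fromCols 0 B) (fromRows Q Sᵀ) (fromBlocks (-1) S 0 R)

/-- The matrix `M = [[I, 0, 0], [0, -Aᵀ, 0], [0, -Bᵀ, 0]]` of the extended symplectic pencil. -/
noncomputable def Mmat {n m : ℕ} (A : Matrix (Fin n) (Fin n) ℝ)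
    (B : Matrix (Fin n) (Fin m) ℝ) :
    Matrix (Fin n ⊕ (Fin n ⊕ Fin m)) (Fin n ⊕ (Fin n ⊕ Fin m)) ℝ :=
  fromBlocks 1 0 0 (fromBlocks (-Aᵀ) 0 (-Bᵀ) 0)

/-!
Write `Δ = X - Y` and `K = K_Y`. The kernel conditions give `S_X R_X† R_X = S_X` and
`R_Y K_Y = S_Yᵀ`, so `T := Bᵀ Δ A_Y = S_Xᵀ - R_X K_Y` has its columns in the range of `R_X`.
Expanding `A_Y = A - B K_Y` then reduces both `S_X R_X† S_Xᵀ - S_Y R_Y† S_Yᵀ` and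
`Aᵀ Δ A - A_Yᵀ Δ A_Y + Tᵀ R_X† T` to `S_X R_X† S_Xᵀ - S_Y K_Y`.
-/
variable {α β ι κ : Type*} [Fintype α] [Fintype β] [Fintype ι] [Fintype κ]

structure IsPenroseInverse (M : Matrix α β ℝ) (P : Matrix β α ℝ) : Prop where
  mul_mul_self : M * P * M = M
  mul_mul_self' : P * M * P = P
  symm_mul : (M * P)ᵀ = M * P
  symm_mul' : (P * M)ᵀ = P * M

namespace IsPenroseInverse

variable {M : Matrix α β ℝ} {P P' : Matrix β α ℝ}

theorem unique (h : IsPenroseInverse M P) (h' : IsPenroseInverse M P') : P = P' := by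
  have hMP : M * P = M * P' :=
    calc M * P = (M * P' * M * P)ᵀ := by rw [h'.mul_mul_self, h.symm_mul]
      _ = (M * P) * (M * P') := by
        rw [Matrix.mul_assoc (M * P'), transpose_mul, h.symm_mul, h'.symm_mul]
      _ = M * P' := by rw [← Matrix.mul_assoc, h.mul_mul_self]
  have hPM : P * M = P' * M :=
    calc P * M = (P * (M * P' * M))ᵀ := by rw [h'.mul_mul_self, h.symm_mul']
      _ = (P' * M) * (P * M) := by
        rw [Matrix.mul_assoc M, ← Matrix.mul_assoc, transpose_mul, h.symm_mul',
          h'.symm_mul']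
      _ = P' * M := by rw [Matrix.mul_assoc, ← Matrix.mul_assoc M, h.mul_mul_self]
  calc P = P * M * P := h.mul_mul_self'.symm
    _ = P' * M * P' := by rw [Matrix.mul_assoc, hMP, ← Matrix.mul_assoc, hPM]
    _ = P' := h'.mul_mul_self'

theorem mpinv_eq (h : IsPenroseInverse M P) : mpinv M = P := by
  have hex : ∃ Q : Matrix β α ℝ,
      M * Q * M = M ∧ Q * M * Q = Q ∧ (M * Q)ᵀ = M * Q ∧ (Q * M)ᵀ = Q * M :=
    ⟨P, h.1, h.2, h.3, h.4⟩
  obtain ⟨h₁, h₂, h₃, h₄⟩ := hex.choose_spec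
  rw [mpinv, dif_pos hex]
  exact IsPenroseInverse.unique ⟨h₁, h₂, h₃, h₄⟩ h

end IsPenroseInverse

section SelfAdjoint

variable [DecidableEq ι]

theorem Matrix.cfc_mul_cfc_real (M : Matrix ι ι ℝ) (f g : ℝ → ℝ) :
    cfc f M * cfc g M = cfc (fun x => f x * g x) M :=
  (cfc_mul f g M (finite_real_spectrum.continuousOn _)
    (finite_real_spectrum.continuousOn _)).symm

theorem Matrix.transpose_cfc_real (M : Matrix ι ι ℝ) (f : ℝ → ℝ) : (cfc f M)ᵀ = cfc f M := by
  rw [← conjTranspose_eq_transpose_of_trivial]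
  exact cfc_predicate f M

-- Since `0⁻¹ = 0`, `x * x⁻¹ * x = x` and `x⁻¹ * x * x⁻¹ = x⁻¹` hold for every real `x`.
theorem isPenroseInverse_cfc_inv {M : Matrix ι ι ℝ} (hM : IsSelfAdjoint M) :
    IsPenroseInverse M (cfc (·⁻¹ : ℝ → ℝ) M) := by
  have key : IsPenroseInverse (cfc (fun x : ℝ => x) M) (cfc (·⁻¹ : ℝ → ℝ) M) := by
    refine ⟨?_, ?_, ?_, ?_⟩ <;> simp only [cfc_mul_cfc_real, transpose_cfc_real]
    · simp only [mul_inv_mul_cancel]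
    · congr! 2 with x
      simpa using mul_inv_mul_cancel x⁻¹
  rwa [cfc_id' ℝ M] at key

theorem mpinv_eq_cfc_inv {M : Matrix ι ι ℝ} (hM : IsSelfAdjoint M) :
    mpinv M = cfc (·⁻¹ : ℝ → ℝ) M :=
  (isPenroseInverse_cfc_inv hM).mpinv_eq

end SelfAdjoint

theorem isPenroseInverse_mpinv_of_transpose_eq {M : Matrix ι ι ℝ} (hM : Mᵀ = M) :
    IsPenroseInverse M (mpinv M) := by
  classical
  rw [mpinv_eq_cfc_inv (isHermitian_iff_isSymm.mpr hM).isSelfAdjoint]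
  exact isPenroseInverse_cfc_inv (isHermitian_iff_isSymm.mpr hM).isSelfAdjoint

theorem transpose_mpinv_of_transpose_eq {M : Matrix ι ι ℝ} (hM : Mᵀ = M) :
    (mpinv M)ᵀ = mpinv M := by
  classical
  rw [mpinv_eq_cfc_inv (isHermitian_iff_isSymm.mpr hM).isSelfAdjoint, transpose_cfc_real]

theorem Matrix.mul_mul_eq_of_ker_le {γ R : Type*} [CommRing R] {M : Matrix α β R}
    {P : Matrix β α R} {S : Matrix γ β R} (hM : M * P * M = M)
    (hker : ∀ v, M *ᵥ v = 0 → S *ᵥ v = 0) : S * P * M = S := by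
  refine ext_iff_mulVec.mpr fun v => ?_
  have hv : M *ᵥ (v - (P * M) *ᵥ v) = 0 := by
    rw [mulVec_sub, mulVec_mulVec, ← Matrix.mul_assoc, hM, sub_self]
  rw [Matrix.mul_assoc, ← mulVec_mulVec, eq_comm, ← sub_eq_zero, ← mulVec_sub]
  exact hker _ hv

theorem Matrix.transpose_sub_mul_mul_sub {R : Type*} [CommRing R] (A D : Matrix ι ι R)
    (B : Matrix ι κ R) (K : Matrix κ ι R) :
    (A - B * K)ᵀ * D * (A - B * K) =
      Aᵀ * D * A - Aᵀ * D * B * K - Kᵀ * (Bᵀ * D * (A - B * K)) := by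
  simp only [transpose_sub, transpose_mul, Matrix.sub_mul, Matrix.mul_sub, Matrix.mul_assoc]
  abel

section Riccati

variable (A : Matrix ι ι ℝ) (B S : Matrix ι κ ℝ) {R : Matrix κ κ ℝ}
  {X Y : Matrix ι ι ℝ}

theorem transpose_RX (hR : Rᵀ = R) (hX : Xᵀ = X) : (RX R B X)ᵀ = RX R B X := by
  simp only [RX, transpose_add, transpose_mul, transpose_transpose, hX, hR, Matrix.mul_assoc]

theorem RX_sub_RX : RX R B X - RX R B Y = Bᵀ * (X - Y) * B := by
  simp only [RX, Matrix.mul_sub, Matrix.sub_mul]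
  abel

theorem SX_sub_SX : SX A B S X - SX A B S Y = Aᵀ * (X - Y) * B := by
  simp only [SX, Matrix.mul_sub, Matrix.sub_mul]
  abel

theorem DOp_sub_DOp (Q : Matrix ι ι ℝ) (R : Matrix κ κ ℝ) :
    DOp A Q B S R X - DOp A Q B S R Y =
      (X - Y) - Aᵀ * (X - Y) * A +
        (SX A B S X * mpinv (RX R B X) * (SX A B S X)ᵀ -
          SX A B S Y * mpinv (RX R B Y) * (SX A B S Y)ᵀ) := by
  simp only [DOp, Matrix.mul_sub, Matrix.sub_mul]
  abel

theorem SX_mul_mpinv_mul_RX (hR : Rᵀ = R) (hX : Xᵀ = X) (hk : KerCond A B S R X) :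
    SX A B S X * mpinv (RX R B X) * RX R B X = SX A B S X :=
  mul_mul_eq_of_ker_le
    (isPenroseInverse_mpinv_of_transpose_eq (transpose_RX B hR hX)).mul_mul_self hk

theorem RX_mul_mpinv_mul_transpose_SX (hR : Rᵀ = R) (hX : Xᵀ = X) (hk : KerCond A B S R X) :
    RX R B X * mpinv (RX R B X) * (SX A B S X)ᵀ = (SX A B S X)ᵀ := by
  conv_rhs => rw [← SX_mul_mpinv_mul_RX A B S hR hX hk]
  rw [transpose_mul, transpose_mul, transpose_RX B hR hX,
    transpose_mpinv_of_transpose_eq (transpose_RX B hR hX), Matrix.mul_assoc]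

theorem RX_mul_KX (hR : Rᵀ = R) (hY : Yᵀ = Y) (hk : KerCond A B S R Y) :
    RX R B Y * KX A B S R Y = (SX A B S Y)ᵀ := by
  rw [KX, ← Matrix.mul_assoc, RX_mul_mpinv_mul_transpose_SX A B S hR hY hk]

theorem transpose_mul_sub_mul_AX (hR : Rᵀ = R) (hX : Xᵀ = X) (hY : Yᵀ = Y)
    (hk : KerCond A B S R Y) :
    Bᵀ * (X - Y) * AX A B S R Y = (SX A B S X)ᵀ - RX R B X * KX A B S R Y := by
  have hΔ : (X - Y)ᵀ = X - Y := by rw [transpose_sub, hX, hY]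
  have hBA : Bᵀ * (X - Y) * A = (SX A B S X)ᵀ - (SX A B S Y)ᵀ := by
    rw [← transpose_sub, SX_sub_SX, transpose_mul, transpose_mul, hΔ, transpose_transpose,
      Matrix.mul_assoc]
  calc Bᵀ * (X - Y) * AX A B S R Y
      = Bᵀ * (X - Y) * A - (RX R B X - RX R B Y) * KX A B S R Y := by
        rw [AX, RX_sub_RX, Matrix.mul_sub, Matrix.mul_assoc _ B]
    _ = (SX A B S X)ᵀ - RX R B X * KX A B S R Y := by
        rw [hBA, Matrix.sub_mul, RX_mul_KX A B S hR hY hk]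
        abel

theorem transpose_mul_mpinv_RX_mul (hR : Rᵀ = R) (hX : Xᵀ = X) (hk : KerCond A B S R X)
    {K T : Matrix κ ι ℝ} (hT : T = (SX A B S X)ᵀ - RX R B X * K) :
    Tᵀ * mpinv (RX R B X) * T =
      SX A B S X * mpinv (RX R B X) * (SX A B S X)ᵀ - SX A B S X * K - Kᵀ * T := by
  have hRGT : RX R B X * mpinv (RX R B X) * T = T := by
    rw [hT, Matrix.mul_sub, RX_mul_mpinv_mul_transpose_SX A B S hR hX hk, ← Matrix.mul_assoc,
      (isPenroseInverse_mpinv_of_transpose_eq (transpose_RX B hR hX)).mul_mul_self]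
  have hTt : Tᵀ = SX A B S X - Kᵀ * RX R B X := by
    rw [hT, transpose_sub, transpose_mul, transpose_transpose, transpose_RX B hR hX]
  calc Tᵀ * mpinv (RX R B X) * T
      = SX A B S X * mpinv (RX R B X) * T - Kᵀ * (RX R B X * mpinv (RX R B X) * T) := by
        rw [hTt, Matrix.sub_mul, Matrix.sub_mul]
        simp only [Matrix.mul_assoc]
    _ = SX A B S X * mpinv (RX R B X) * (SX A B S X)ᵀ - SX A B S X * K - Kᵀ * T := by
        rw [hRGT]
        nth_rw 1 [hT]
        rw [Matrix.mul_sub, ← Matrix.mul_assoc, SX_mul_mpinv_mul_RX A B S hR hX hk]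

theorem SX_mpinv_SX_sub_SX_mpinv_SX (hR : Rᵀ = R) (hX : Xᵀ = X) (hY : Yᵀ = Y)
    (hkX : KerCond A B S R X) (hkY : KerCond A B S R Y) :
    SX A B S X * mpinv (RX R B X) * (SX A B S X)ᵀ -
        SX A B S Y * mpinv (RX R B Y) * (SX A B S Y)ᵀ =
      Aᵀ * (X - Y) * A - (AX A B S R Y)ᵀ * (X - Y) * AX A B S R Y +
        (AX A B S R Y)ᵀ * (X - Y) * B * mpinv (RX R B X) * Bᵀ * (X - Y) * AX A B S R Y := by
  set K := KX A B S R Y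
  set T := Bᵀ * (X - Y) * AX A B S R Y with hT_def
  have hT : T = (SX A B S X)ᵀ - RX R B X * K := transpose_mul_sub_mul_AX A B S hR hX hY hkY
  have hTt : (AX A B S R Y)ᵀ * (X - Y) * B = Tᵀ := by
    rw [hT_def, transpose_mul, transpose_mul, transpose_sub, hX, hY, transpose_transpose,
      Matrix.mul_assoc]
  have hAA : (AX A B S R Y)ᵀ * (X - Y) * AX A B S R Y =
      Aᵀ * (X - Y) * A - (SX A B S X - SX A B S Y) * K - Kᵀ * T := by
    rw [SX_sub_SX, hT_def]
    exact transpose_sub_mul_mul_sub ..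
  have hSY : SX A B S Y * mpinv (RX R B Y) * (SX A B S Y)ᵀ = SX A B S Y * K :=
    Matrix.mul_assoc ..
  rw [hTt, Matrix.mul_assoc (Tᵀ * _), Matrix.mul_assoc (Tᵀ * _), ← hT_def,
    transpose_mul_mpinv_RX_mul A B S hR hX hkX hT, hAA, hSY]
  simp only [Matrix.sub_mul]
  abel

end Riccati

theorem stmt_6_general {n m : ℕ}
    (A Q : Matrix (Fin n) (Fin n) ℝ) (B S : Matrix (Fin n) (Fin m) ℝ)
    (R : Matrix (Fin m) (Fin m) ℝ)
    (hPi : (fromBlocks Q S Sᵀ R).PosSemidef)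
    (X Y : Matrix (Fin n) (Fin n) ℝ) (hX : Xᵀ = X) (hY : Yᵀ = Y)
    (hkX : KerCond A B S R X) (hkY : KerCond A B S R Y) :
    DOp A Q B S R X - DOp A Q B S R Y =
      (X - Y) - (AX A B S R Y)ᵀ * (X - Y) * AX A B S R Y +
        (AX A B S R Y)ᵀ * (X - Y) * B * mpinv (RX R B X) * Bᵀ * (X - Y) * AX A B S R Y := by
  have hR : Rᵀ = R := isHermitian_iff_isSymm.mp (isHermitian_fromBlocks_iff.mp hPi.1).2.2.2
  rw [DOp_sub_DOp, SX_mpinv_SX_sub_SX_mpinv_SX A B S hR hX hY hkX hkY]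
  abel

/-- `𝔇(X) - 𝔇(Y) = Δ - A_Yᵀ Δ A_Y + A_Yᵀ Δ B R_X† Bᵀ Δ A_Y` with `Δ = X - Y`. -/
theorem stmt_6 {n m : ℕ} (hn : 0 < n) (hm : 0 < m)
    (A Q : Matrix (Fin n) (Fin n) ℝ) (B S : Matrix (Fin n) (Fin m) ℝ)
    (R : Matrix (Fin m) (Fin m) ℝ)
    (hPi : (fromBlocks Q S Sᵀ R).PosSemidef)
    (X Y : Matrix (Fin n) (Fin n) ℝ) (hX : Xᵀ = X) (hY : Yᵀ = Y)
    (hkX : KerCond A B S R X) (hkY : KerCond A B S R Y) :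
    DOp A Q B S R X - DOp A Q B S R Y =
      (X - Y) - (AX A B S R Y)ᵀ * (X - Y) * AX A B S R Y +
        (AX A B S R Y)ᵀ * (X - Y) * B * mpinv (RX R B X) * Bᵀ * (X - Y) * AX A B S R Y :=
  stmt_6_general A Q B S R hPi X Y hX hY hkX hkY
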